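/- Fix α, β ∈ (0,1), positive reals a, b, μ, T, θ ∈ (π/2, π/(1+α)), and a nonnegative integer m. There exists a constant C > 0 such that for every real λ > 0 and every t ∈ (0, T], the contour integral F_{m,λ}(t) (defined in the context) satisfies λ · |F_{m,λ}(t)| ≤ C · t^{−m−(α−β+1)}. -/

import Mathlib

open MeasureTheory intervalIntegral


/-- The symbol `g(z) = (z + a z^{1+α}) / (μ (1 + b z^β))` of the fractional
Oldroyd-B problem. Powers are principal complex powers. -/
noncomputable def oldroydSymbol (a b μ α β : ℝ) (z : ℂ) : ℂ :=
  (z + (a : ℂ) * z ^ ((1 + α : ℝ) : ℂ)) / ((μ : ℂ) * (1 + (b : ℂ) * z ^ ((β : ℝ) : ℂ)))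

/-- `h_λ(z) = g(z) / (z (g(z) + λ))`, the eigenvalue-wise symbol of the
Laplace-transformed solution operator `Ê(z)`. -/
noncomputable def oldroydKernel (a b μ α β lam : ℝ) (z : ℂ) : ℂ :=
  oldroydSymbol a b μ α β z / (z * (oldroydSymbol a b μ α β z + (lam : ℂ)))

/-- Integrand on the ray `{ρ e^{iθ'} : ρ ≥ 1/t}` of the contour `Γ_{θ,1/t}`. -/
noncomputable def rayIntegrand (a b μ α β lam : ℝ) (m : ℕ) (t θ' : ℝ) (ρ : ℝ) : ℂ :=
  ((ρ : ℂ) * Complex.exp ((θ' : ℂ) * Complex.I)) ^ m *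
    Complex.exp ((t : ℂ) * (ρ : ℂ) * Complex.exp ((θ' : ℂ) * Complex.I)) *
    oldroydKernel a b μ α β lam ((ρ : ℂ) * Complex.exp ((θ' : ℂ) * Complex.I))

/-- Integrand on the arc `{(1/t) e^{iψ} : |ψ| ≤ θ}` of the contour `Γ_{θ,1/t}`. -/
noncomputable def arcIntegrand (a b μ α β lam : ℝ) (m : ℕ) (t : ℝ) (ψ : ℝ) : ℂ :=
  Complex.exp ((ψ : ℂ) * Complex.I) *
    (((1 / t : ℝ) : ℂ) * Complex.exp ((ψ : ℂ) * Complex.I)) ^ m *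
    Complex.exp (Complex.exp ((ψ : ℂ) * Complex.I)) *
    oldroydKernel a b μ α β lam (((1 / t : ℝ) : ℂ) * Complex.exp ((ψ : ℂ) * Complex.I))

/-- The contour integral
`F_{m,λ}(t) = (1/2πi) ∫_{Γ_{θ,1/t}} e^{zt} z^m h_λ(z) dz`,
written out over the two rays and the arc of `Γ_{θ,1/t}`. -/
noncomputable def contourF (a b μ α β lam θ : ℝ) (m : ℕ) (t : ℝ) : ℂ :=
  (1 / (2 * (Real.pi : ℂ) * Complex.I)) *
    (Complex.exp ((θ : ℂ) * Complex.I) *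
        (∫ ρ in Set.Ioi (1 / t), rayIntegrand a b μ α β lam m t θ ρ) -
      Complex.exp ((-θ : ℂ) * Complex.I) *
        (∫ ρ in Set.Ioi (1 / t), rayIntegrand a b μ α β lam m t (-θ) ρ) +
      (Complex.I / (t : ℂ)) * ∫ ψ in (-θ)..θ, arcIntegrand a b μ α β lam m t ψ)

/-! On `Γ_{θ,1/t}` write `z = ρ e^{iφ}` with `|φ| ≤ θ`. After rotation by `e^{-i(1+α)φ/2}`, each
of the terms `z`, `a z^{1+α}`, `λμ` and `λμ b z^β` has argument of modulus at most
`(1+α)θ/2 < π/2`, so `|z + a z^{1+α} + λμ(1 + b z^β)| ≥ cos((1+α)θ/2) λμ (1 + bρ^β)`. As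
`h_λ(z) = (z + a z^{1+α}) / (z (z + a z^{1+α} + λμ(1 + b z^β)))`, this gives
`λ |h_λ(z)| ≤ K ρ^{α-β}` for `ρ ≥ 1/T`. On the rays `|e^{tz}| = e^{tρ cos θ}` with `cos θ < 0`, and
the substitution `s = tρ` turns the ray integrals into `t^{-m-(α-β)-1}` times a convergent
integral; on the arc the integrand is `O(t^{-m-(α-β)})` along a path of length `2θ/t`. -/

open Complex

theorem ofReal_mul_exp_mul_I_cpow {ρ φ : ℝ} (hρ : 0 < ρ) (hφ : φ ∈ Set.Ioc (-Real.pi) Real.pi)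
    (s : ℝ) :
    ((ρ : ℂ) * exp (φ * I)) ^ (s : ℂ) = ((ρ ^ s : ℝ) : ℂ) * exp ((s * φ : ℝ) * I) := by
  have hpolar : (ρ : ℂ) * exp (φ * I) = exp (Real.log ρ + φ * I) := by
    rw [exp_add, ← ofReal_exp, Real.exp_log hρ]
  have hlog : log ((ρ : ℂ) * exp (φ * I)) = Real.log ρ + φ * I := by
    rw [hpolar]
    exact log_exp (by simpa using hφ.1) (by simpa using hφ.2)
  rw [cpow_def_of_ne_zero (by rw [hpolar]; exact exp_ne_zero _), hlog, Real.rpow_def_of_pos hρ,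
    ofReal_exp, ← exp_add]
  push_cast
  ring_nf

theorem mul_cos_le_re_ofReal_mul_exp {r x δ : ℝ} (hr : 0 ≤ r) (hx : |x| ≤ δ)
    (hδ : δ ≤ Real.pi) : r * Real.cos δ ≤ ((r : ℂ) * exp (x * I)).re := by
  rw [re_ofReal_mul, exp_ofReal_mul_I_re, ← Real.cos_abs x]
  exact mul_le_mul_of_nonneg_left
    (Real.cos_le_cos_of_nonneg_of_le_pi (abs_nonneg x) hδ hx) hr

theorem oldroydKernel_eq_div {a b μ α β lam : ℝ} (hμ : μ ≠ 0) {z : ℂ}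
    (hD : 1 + (b : ℂ) * z ^ ((β : ℝ) : ℂ) ≠ 0) :
    oldroydKernel a b μ α β lam z =
      (z + a * z ^ ((1 + α : ℝ) : ℂ)) /
        (z * (z + a * z ^ ((1 + α : ℝ) : ℂ) + lam * μ * (1 + b * z ^ ((β : ℝ) : ℂ)))) := by
  have hμD : (μ : ℂ) * (1 + b * z ^ ((β : ℝ) : ℂ)) ≠ 0 := mul_ne_zero (by exact_mod_cast hμ) hD
  rw [oldroydKernel, oldroydSymbol, div_add' _ _ _ hμD, mul_div_assoc',
    div_div_div_cancel_right₀ hμD]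
  ring_nf

theorem abs_mul_sub_half_le {c ω φ θ : ℝ} (hc : c ∈ Set.Icc 0 ω) (hφ : |φ| ≤ θ) :
    |c * φ - ω * φ / 2| ≤ ω * θ / 2 := by
  rw [show c * φ - ω * φ / 2 = φ * (c - ω / 2) by ring, abs_mul]
  have hcω : |c - ω / 2| ≤ ω / 2 := abs_le.2 ⟨by linarith [hc.1], by linarith [hc.2]⟩
  calc |φ| * |c - ω / 2| ≤ θ * (ω / 2) := mul_le_mul hφ hcω (abs_nonneg _) ((abs_nonneg φ).trans hφ)
    _ = ω * θ / 2 := by ring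

theorem cos_mul_div_two_pos {ω θ : ℝ} (h₀ : 0 ≤ ω * θ) (hπ : ω * θ < Real.pi) :
    0 < Real.cos (ω * θ / 2) :=
  Real.cos_pos_of_mem_Ioo ⟨by linarith [Real.pi_pos], by linarith⟩

theorem re_mul_exp_ofReal_mul_I_le_norm (w : ℂ) (x : ℝ) : (w * exp (x * I)).re ≤ ‖w‖ :=
  (re_le_norm _).trans_eq (by rw [norm_mul, norm_exp_ofReal_mul_I, mul_one])

section Sector

variable {α θ ρ φ : ℝ} (hα : 0 ≤ α) (hθ : (1 + α) * θ < Real.pi) (hρ : 0 < ρ) (hφ : |φ| ≤ θ)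
include hα hθ hρ hφ

theorem mul_rpow_mul_cos_le_re_cpow_rotated {r s : ℝ} (hr : 0 ≤ r) (hs : s ∈ Set.Icc 0 (1 + α)) :
    r * ρ ^ s * Real.cos ((1 + α) * θ / 2) ≤
      ((r : ℂ) * ((ρ : ℂ) * exp (φ * I)) ^ (s : ℂ) * exp ((-((1 + α) * φ / 2) : ℝ) * I)).re := by
  have hθ0 : 0 ≤ θ := (abs_nonneg φ).trans hφ
  have hφπ : φ ∈ Set.Ioc (-Real.pi) Real.pi := by
    have : θ < Real.pi := by nlinarith
    exact ⟨by linarith [neg_abs_le φ], by linarith [le_abs_self φ]⟩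
  have hrot : (r : ℂ) * ((ρ : ℂ) * exp (φ * I)) ^ (s : ℂ) * exp ((-((1 + α) * φ / 2) : ℝ) * I) =
      ((r * ρ ^ s : ℝ) : ℂ) * exp ((s * φ - (1 + α) * φ / 2 : ℝ) * I) := by
    rw [ofReal_mul_exp_mul_I_cpow hρ hφπ, show ((s * φ - (1 + α) * φ / 2 : ℝ) : ℂ) * I =
      (s * φ : ℝ) * I + (-((1 + α) * φ / 2) : ℝ) * I by push_cast; ring, exp_add]
    push_cast
    ring
  have hωθ : 0 ≤ (1 + α) * θ := by positivity
  rw [hrot]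
  exact mul_cos_le_re_ofReal_mul_exp (by positivity) (abs_mul_sub_half_le hs hφ) (by linarith)

theorem mul_cos_le_norm_one_add_mul_cpow {b β : ℝ} (hb : 0 ≤ b) (hβ : β ∈ Set.Icc 0 (1 + α)) :
    (1 + b * ρ ^ β) * Real.cos ((1 + α) * θ / 2) ≤
      ‖1 + (b : ℂ) * ((ρ : ℂ) * exp (φ * I)) ^ ((β : ℝ) : ℂ)‖ := by
  set u := exp ((-((1 + α) * φ / 2) : ℝ) * I)
  have h0 := mul_rpow_mul_cos_le_re_cpow_rotated hα hθ hρ hφ zero_le_one ⟨le_rfl, by linarith⟩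
  simp only [Real.rpow_zero, ofReal_zero, cpow_zero, ofReal_one, one_mul] at h0
  calc (1 + b * ρ ^ β) * Real.cos ((1 + α) * θ / 2)
      = Real.cos ((1 + α) * θ / 2) + b * ρ ^ β * Real.cos ((1 + α) * θ / 2) := by ring
    _ ≤ u.re + ((b : ℂ) * ((ρ : ℂ) * exp (φ * I)) ^ ((β : ℝ) : ℂ) * u).re :=
        add_le_add h0 (mul_rpow_mul_cos_le_re_cpow_rotated hα hθ hρ hφ hb hβ)
    _ = ((1 + (b : ℂ) * ((ρ : ℂ) * exp (φ * I)) ^ ((β : ℝ) : ℂ)) * u).re := by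
        rw [add_mul, one_mul, add_re]
    _ ≤ _ := re_mul_exp_ofReal_mul_I_le_norm _ _

theorem mul_cos_le_norm_add_mul_one_add_mul_cpow {a b β κ : ℝ} (ha : 0 ≤ a) (hb : 0 ≤ b)
    (hβ : β ∈ Set.Icc 0 (1 + α)) (hκ : 0 ≤ κ) :
    κ * (1 + b * ρ ^ β) * Real.cos ((1 + α) * θ / 2) ≤
      ‖(ρ : ℂ) * exp (φ * I) + a * ((ρ : ℂ) * exp (φ * I)) ^ ((1 + α : ℝ) : ℂ) +
        κ * (1 + b * ((ρ : ℂ) * exp (φ * I)) ^ ((β : ℝ) : ℂ))‖ := by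
  set z := (ρ : ℂ) * exp (φ * I)
  set u := exp ((-((1 + α) * φ / 2) : ℝ) * I)
  have hz := mul_rpow_mul_cos_le_re_cpow_rotated hα hθ hρ hφ zero_le_one ⟨zero_le_one, by linarith⟩
  have hza := mul_rpow_mul_cos_le_re_cpow_rotated hα hθ hρ hφ ha ⟨by linarith, le_rfl⟩
  have hκ1 := mul_rpow_mul_cos_le_re_cpow_rotated hα hθ hρ hφ hκ ⟨le_rfl, by linarith⟩
  have hκb := mul_rpow_mul_cos_le_re_cpow_rotated hα hθ hρ hφ (mul_nonneg hκ hb) hβ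
  simp only [Real.rpow_zero, Real.rpow_one, ofReal_zero, ofReal_one, cpow_zero, cpow_one, one_mul,
    mul_one] at hz hκ1
  have hcos := cos_mul_div_two_pos (by have := (abs_nonneg φ).trans hφ; positivity) hθ
  have hρc : 0 ≤ ρ * Real.cos ((1 + α) * θ / 2) := by positivity
  have hρac : 0 ≤ a * ρ ^ (1 + α) * Real.cos ((1 + α) * θ / 2) := by positivity
  calc κ * (1 + b * ρ ^ β) * Real.cos ((1 + α) * θ / 2)
      ≤ (z * u).re + ((a : ℂ) * z ^ ((1 + α : ℝ) : ℂ) * u).re + (κ * u).re +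
          (((κ * b : ℝ) : ℂ) * z ^ ((β : ℝ) : ℂ) * u).re := by
        linarith
    _ = ((z + a * z ^ ((1 + α : ℝ) : ℂ) + κ * (1 + b * z ^ ((β : ℝ) : ℂ))) * u).re := by
        simp only [← add_re]; congr 1; push_cast; ring
    _ ≤ _ := re_mul_exp_ofReal_mul_I_le_norm _ _

theorem norm_oldroydKernel_le {a b μ β lam T : ℝ} (ha : 0 ≤ a) (hb : 0 < b) (hμ : 0 < μ)
    (hβ : β ∈ Set.Icc 0 (1 + α)) (hlam : 0 < lam) (hT : 0 < T) (hρT : 1 / T ≤ ρ) :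
    ‖oldroydKernel a b μ α β lam ((ρ : ℂ) * exp (φ * I))‖ ≤
      (T ^ α + a) / (b * μ * Real.cos ((1 + α) * θ / 2)) / lam * ρ ^ (α - β) := by
  set z := (ρ : ℂ) * exp (φ * I)
  have hc := cos_mul_div_two_pos (by have := (abs_nonneg φ).trans hφ; positivity) hθ
  have hz : ‖z‖ = ρ := by simp [z, norm_exp_ofReal_mul_I, abs_of_pos hρ]
  have hD := mul_cos_le_norm_one_add_mul_cpow hα hθ hρ hφ hb.le hβ
  have hW := mul_cos_le_norm_add_mul_one_add_mul_cpow hα hθ hρ hφ ha hb.le hβ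
    (mul_pos hlam hμ).le
  have hN : ‖z + a * z ^ ((1 + α : ℝ) : ℂ)‖ ≤ ρ * (1 + a * ρ ^ α) :=
    calc _ ≤ ‖z‖ + ‖(a : ℂ)‖ * ‖z ^ ((1 + α : ℝ) : ℂ)‖ :=
          (norm_add_le _ _).trans_eq (by rw [norm_mul (a : ℂ)])
      _ = ρ * (1 + a * ρ ^ α) := by
        rw [norm_cpow_real, hz, norm_real, Real.norm_of_nonneg ha, Real.rpow_add hρ, Real.rpow_one]
        ring
  have hTρ : 1 ≤ T ^ α * ρ ^ α := by
    rw [← Real.mul_rpow hT.le hρ.le]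
    exact Real.one_le_rpow (by rwa [div_le_iff₀' hT] at hρT) hα
  rw [oldroydKernel_eq_div hμ.ne' (norm_pos_iff.1 (lt_of_lt_of_le (by positivity) hD)), norm_div,
    norm_mul, hz, ← ofReal_mul]
  have hρβ : 0 < ρ ^ β := Real.rpow_pos_of_pos hρ β
  calc _ ≤ ρ * (1 + a * ρ ^ α) / (ρ * (lam * μ * (1 + b * ρ ^ β) * Real.cos ((1 + α) * θ / 2))) :=
        div_le_div₀ (by positivity) hN (by positivity) (mul_le_mul_of_nonneg_left hW hρ.le)
    _ ≤ ρ * ((T ^ α + a) * ρ ^ α) / (ρ * (lam * μ * (b * ρ ^ β) * Real.cos ((1 + α) * θ / 2))) := by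
        gcongr
        · nlinarith [Real.rpow_pos_of_pos hρ α]
        · linarith
    _ = _ := by
        rw [Real.rpow_sub hρ]
        field_simp

end Sector

theorem setIntegral_Ioi_one_div_rpow_mul_exp {t : ℝ} (ht : 0 < t) (p κ : ℝ) :
    ∫ ρ in Set.Ioi (1 / t), ρ ^ p * Real.exp (κ * (t * ρ)) =
      t ^ (-p - 1) * ∫ s in Set.Ioi 1, s ^ p * Real.exp (κ * s) := by
  have hscale : ∀ ρ ∈ Set.Ioi (1 / t), ρ ^ p * Real.exp (κ * (t * ρ)) =
      t ^ (-p) * ((t * ρ) ^ p * Real.exp (κ * (t * ρ))) := by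
    intro ρ hρ
    have hρ0 : 0 < ρ := (one_div_pos.2 ht).trans hρ
    have hcancel : t ^ (-p) * t ^ p = 1 := by
      rw [← Real.rpow_add ht, neg_add_cancel, Real.rpow_zero]
    rw [Real.mul_rpow ht.le hρ0.le, ← mul_assoc (t ^ (-p)), ← mul_assoc (t ^ (-p)), hcancel,
      one_mul]
  rw [setIntegral_congr_fun measurableSet_Ioi hscale, MeasureTheory.integral_const_mul,
    integral_comp_mul_left_Ioi (fun s => s ^ p * Real.exp (κ * s)) _ ht, mul_one_div_cancel ht.ne',
    smul_eq_mul, ← mul_assoc, ← Real.rpow_neg_one, ← Real.rpow_add ht, sub_eq_add_neg]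

theorem norm_setIntegral_Ioi_one_div_le {E : Type*} [NormedAddCommGroup E] [NormedSpace ℝ E]
    {f : ℝ → E} {t p κ M : ℝ} (ht : 0 < t) (hp : -1 < p) (hκ : κ < 0)
    (hf : ∀ ρ > 1 / t, ‖f ρ‖ ≤ M * (ρ ^ p * Real.exp (κ * (t * ρ)))) :
    ‖∫ ρ in Set.Ioi (1 / t), f ρ‖ ≤
      M * (∫ s in Set.Ioi 1, s ^ p * Real.exp (κ * s)) * t ^ (-p - 1) := by
  have hint : IntegrableOn (fun ρ : ℝ => ρ ^ p * Real.exp (κ * (t * ρ))) (Set.Ioi (1 / t)) := by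
    have h := integrableOn_rpow_mul_exp_neg_mul_rpow hp zero_lt_one (by nlinarith : 0 < -κ * t)
    refine (h.mono_set (Set.Ioi_subset_Ioi (one_div_pos.2 ht).le)).congr_fun (fun ρ _ => ?_)
      measurableSet_Ioi
    simp only [Real.rpow_one]
    ring_nf
  calc ‖∫ ρ in Set.Ioi (1 / t), f ρ‖
      ≤ ∫ ρ in Set.Ioi (1 / t), M * (ρ ^ p * Real.exp (κ * (t * ρ))) :=
        norm_integral_le_of_norm_le (hint.const_mul M)
          ((ae_restrict_mem measurableSet_Ioi).mono fun ρ hρ => hf ρ hρ)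
    _ = _ := by
        rw [MeasureTheory.integral_const_mul, setIntegral_Ioi_one_div_rpow_mul_exp ht]
        ring

section Contour

variable {a b μ α β lam : ℝ} {m : ℕ} {t : ℝ}

theorem norm_rayIntegrand {θ' ρ : ℝ} (hρ : 0 < ρ) :
    ‖rayIntegrand a b μ α β lam m t θ' ρ‖ =
      ρ ^ m * Real.exp (Real.cos θ' * (t * ρ)) *
        ‖oldroydKernel a b μ α β lam ((ρ : ℂ) * exp (θ' * I))‖ := by
  have hexp : (t : ℂ) * ρ * exp (θ' * I) = ((t * ρ : ℝ) : ℂ) * exp (θ' * I) := by push_cast; ring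
  rw [rayIntegrand, norm_mul, norm_mul, norm_pow, norm_mul, norm_exp_ofReal_mul_I, norm_real,
    Real.norm_of_nonneg hρ.le, mul_one, hexp, norm_exp, re_ofReal_mul, exp_ofReal_mul_I_re,
    mul_comm (t * ρ)]

theorem norm_arcIntegrand (ht : 0 < t) (ψ : ℝ) :
    ‖arcIntegrand a b μ α β lam m t ψ‖ =
      (1 / t) ^ m * Real.exp (Real.cos ψ) *
        ‖oldroydKernel a b μ α β lam (((1 / t : ℝ) : ℂ) * exp (ψ * I))‖ := by
  rw [arcIntegrand, norm_mul, norm_mul, norm_mul, norm_pow, norm_mul, norm_exp_ofReal_mul_I,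
    norm_real, Real.norm_of_nonneg (one_div_pos.2 ht).le, norm_exp, exp_ofReal_mul_I_re, one_mul, mul_one]

theorem norm_contourF_le_add {θ : ℝ} (ht : 0 < t) :
    ‖contourF a b μ α β lam θ m t‖ ≤
      (‖∫ ρ in Set.Ioi (1 / t), rayIntegrand a b μ α β lam m t θ ρ‖ +
        ‖∫ ρ in Set.Ioi (1 / t), rayIntegrand a b μ α β lam m t (-θ) ρ‖ +
        ‖∫ ψ in (-θ)..θ, arcIntegrand a b μ α β lam m t ψ‖ / t) / (2 * Real.pi) := by
  have hpre : ‖1 / (2 * (Real.pi : ℂ) * I)‖ = 1 / (2 * Real.pi) := by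
    simp [abs_of_pos Real.pi_pos]
  have hI : ‖I / (t : ℂ)‖ = 1 / t := by simp [abs_of_pos ht]
  rw [contourF, norm_mul, hpre, one_div_mul_eq_div]
  gcongr
  refine (norm_add_le _ _).trans (add_le_add ((norm_sub_le _ _).trans_eq ?_) ?_)
  · rw [norm_mul, norm_mul, norm_exp_ofReal_mul_I, ← ofReal_neg, norm_exp_ofReal_mul_I, one_mul,
      one_mul]
  · rw [norm_mul, hI, one_div_mul_eq_div]

theorem norm_contourF_le {θ q M : ℝ} (hθ : 0 ≤ θ) (hcos : Real.cos θ < 0) (ht : 0 < t)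
    (hq : -1 < m + q)
    (hK : ∀ ρ ≥ 1 / t, ∀ φ : ℝ, |φ| ≤ θ →
      ‖oldroydKernel a b μ α β lam ((ρ : ℂ) * exp (φ * I))‖ ≤ M * ρ ^ q) :
    ‖contourF a b μ α β lam θ m t‖ ≤
      M * ((∫ s in Set.Ioi 1, s ^ (m + q) * Real.exp (Real.cos θ * s)) + θ * Real.exp 1) /
        Real.pi * t ^ (-(m : ℝ) - (q + 1)) := by
  set J := ∫ s in Set.Ioi 1, s ^ (m + q) * Real.exp (Real.cos θ * s)
  have hexp : t ^ (-(m : ℝ) - (q + 1)) = (1 / t) ^ m * (1 / t) ^ q / t := by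
    rw [show -(m : ℝ) - (q + 1) = -m + -q + -1 by ring, Real.rpow_add ht, Real.rpow_add ht,
      Real.rpow_neg_one, Real.rpow_neg ht.le, Real.rpow_neg ht.le, Real.rpow_natCast,
      one_div, inv_pow, Real.inv_rpow ht.le, div_eq_mul_inv]
  have hray : ∀ θ' : ℝ, |θ'| = θ → Real.cos θ' = Real.cos θ →
      ‖∫ ρ in Set.Ioi (1 / t), rayIntegrand a b μ α β lam m t θ' ρ‖ ≤
        M * J * t ^ (-(m : ℝ) - (q + 1)) := by
    intro θ' hθ' hcosθ'
    rw [show -(m : ℝ) - (q + 1) = -(m + q) - 1 by ring]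
    refine norm_setIntegral_Ioi_one_div_le ht hq hcos fun ρ hρ => ?_
    have hρ0 : 0 < ρ := (one_div_pos.2 ht).trans hρ
    rw [norm_rayIntegrand hρ0, hcosθ', Real.rpow_add hρ0, Real.rpow_natCast]
    calc _ ≤ ρ ^ m * Real.exp (Real.cos θ * (t * ρ)) * (M * ρ ^ q) :=
          mul_le_mul_of_nonneg_left (hK ρ hρ.le θ' hθ'.le) (by positivity)
      _ = _ := by ring
  have harc : ‖∫ ψ in (-θ)..θ, arcIntegrand a b μ α β lam m t ψ‖ ≤
      (1 / t) ^ m * Real.exp 1 * (M * (1 / t) ^ q) * (2 * θ) := by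
    refine (intervalIntegral.norm_integral_le_of_norm_le_const fun ψ hψ => ?_).trans_eq
      (by rw [sub_neg_eq_add, ← two_mul, abs_of_nonneg (by positivity)])
    rw [Set.uIoc_of_le (by linarith)] at hψ
    rw [norm_arcIntegrand ht]
    gcongr
    · exact Real.cos_le_one ψ
    · exact hK _ le_rfl ψ (abs_le.2 ⟨hψ.1.le, hψ.2⟩)
  have harc' : ‖∫ ψ in (-θ)..θ, arcIntegrand a b μ α β lam m t ψ‖ / t ≤
      2 * θ * Real.exp 1 * M * t ^ (-(m : ℝ) - (q + 1)) := by
    rw [hexp]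
    calc _ ≤ (1 / t) ^ m * Real.exp 1 * (M * (1 / t) ^ q) * (2 * θ) / t := by gcongr
      _ = _ := by ring
  refine (norm_contourF_le_add ht).trans ?_
  calc _ ≤ (M * J * t ^ (-(m : ℝ) - (q + 1)) + M * J * t ^ (-(m : ℝ) - (q + 1)) +
        2 * θ * Real.exp 1 * M * t ^ (-(m : ℝ) - (q + 1))) / (2 * Real.pi) := by
        gcongr
        · exact hray θ (abs_of_nonneg hθ) rfl
        · exact hray (-θ) (by rw [abs_neg, abs_of_nonneg hθ]) (Real.cos_neg θ)
    _ = _ := by field_simp; ring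

end Contour

/-- Scalar form of estimate (2.11) with `ν = 1` in Theorem 2.1:
`λ |F_{m,λ}(t)| ≤ C t^{-m-(α-β+1)}` uniformly for `λ > 0` and `t ∈ (0, T]`. -/
theorem contourF_bound_nu_one (α β a b μ T θ : ℝ)
    (hα : α ∈ Set.Ioo (0 : ℝ) 1) (hβ : β ∈ Set.Ioo (0 : ℝ) 1)
    (ha : 0 < a) (hb : 0 < b) (hμ : 0 < μ) (hT : 0 < T)
    (hθ : Real.pi / 2 < θ) (hθ' : θ < Real.pi / (1 + α)) (m : ℕ) :
    ∃ C > 0, ∀ lam > (0 : ℝ), ∀ t ∈ Set.Ioc (0 : ℝ) T,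
      lam * ‖contourF a b μ α β lam θ m t‖ ≤
        C * t ^ (-(m : ℝ) - (α - β + 1)) := by
  have hθ0 : 0 < θ := by linarith [Real.pi_pos]
  have hωθ : (1 + α) * θ < Real.pi := by
    rw [mul_comm]; exact (lt_div_iff₀ (by linarith [hα.1])).1 hθ'
  have hcos : Real.cos θ < 0 :=
    Real.cos_neg_of_pi_div_two_lt_of_lt hθ (by nlinarith [hα.1, Real.pi_pos])
  set K := (T ^ α + a) / (b * μ * Real.cos ((1 + α) * θ / 2))
  set J := ∫ s in Set.Ioi 1, s ^ (m + (α - β)) * Real.exp (Real.cos θ * s)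
  have hK : 0 < K := by
    have := cos_mul_div_two_pos (by nlinarith [hα.1]) hωθ
    have := Real.rpow_pos_of_pos hT α
    positivity
  have hJ : 0 ≤ J := setIntegral_nonneg measurableSet_Ioi fun s hs =>
    mul_nonneg (Real.rpow_nonneg (zero_le_one.trans (le_of_lt hs)) _) (Real.exp_pos _).le
  refine ⟨K * (J + θ * Real.exp 1) / Real.pi, by positivity, fun lam hlam t ht => ?_⟩
  have hkernel : ∀ ρ ≥ 1 / t, ∀ φ : ℝ, |φ| ≤ θ →
      ‖oldroydKernel a b μ α β lam ((ρ : ℂ) * exp (φ * I))‖ ≤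
        K / lam * ρ ^ (α - β) := fun ρ hρ φ hφ =>
    norm_oldroydKernel_le hα.1.le hωθ ((one_div_pos.2 ht.1).trans_le hρ) hφ ha.le hb hμ
      ⟨hβ.1.le, by linarith [hα.1, hβ.2]⟩ hlam hT ((one_div_le_one_div_of_le ht.1 ht.2).trans hρ)
  have hq : -1 < (m : ℝ) + (α - β) := by linarith [hα.1, hβ.2, (Nat.cast_nonneg m : (0 : ℝ) ≤ m)]
  calc lam * ‖contourF a b μ α β lam θ m t‖
      ≤ lam * (K / lam * (J + θ * Real.exp 1) / Real.pi * t ^ (-(m : ℝ) - (α - β + 1))) :=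
        mul_le_mul_of_nonneg_left (norm_contourF_le hθ0.le hcos ht.1 hq hkernel) hlam.le
    _ = K * (J + θ * Real.exp 1) / Real.pi * t ^ (-(m : ℝ) - (α - β + 1)) := by
        field_simp
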